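/- arXiv:math/0101165 — 2 statements merged into one kernel-verified Lean document; each statement's English description precedes it below -/
import Mathlib

section
/- Define a commutative ring structure on the free abelian group A with basis {b(m) : m odd positive integer} by b(q) × b(r) = Σ_{s} b(s), where s ranges over {q+r-1, q+r-3, ..., |q-r|+1}. Then this multiplication is associative and commutative with identity b(1). -/
/-- Odd positive-index labels for the fusion ring basis b(m), m odd. -/
abbrev OddNat := {m : ℕ // Odd m}

/-- The free abelian group A on the basis {b(m) : m odd}. -/
abbrev FusionA := OddNat →₀ ℤ

/-- The label q + r - 1 - 2k appearing in b(q) × b(r), which is odd. -/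
def fusionIdx (q r : OddNat) (k : ℕ) (hk : k < min q.1 r.1) : OddNat :=
  ⟨q.1 + r.1 - 1 - 2 * k, by
    obtain ⟨a, ha⟩ := q.2; obtain ⟨b, hb⟩ := r.2
    exact ⟨(a + b) - k, by omega⟩⟩

/-- b(q) × b(r) = Σ_{k=0}^{min(q,r)-1} b(q + r - 1 - 2k). -/
noncomputable def fusionBasisMul (q r : OddNat) : FusionA :=
  ∑ k ∈ (Finset.range (min q.1 r.1)).attach,
    Finsupp.single (fusionIdx q r k.1 (Finset.mem_range.mp k.2)) 1

/-- The ℤ-bilinear extension of the basis product to all of A. -/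
noncomputable def fusionMul (f g : FusionA) : FusionA :=
  f.sum fun q a => g.sum fun r c => (a * c) • fusionBasisMul q r

/-! Writing b(2a+1) for the spin-a representation of SU(2), the product is the Clebsch–Gordan
rule: b(s) occurs in b(q) × b(r), with multiplicity one, exactly when q, r, s satisfy the strict
triangle inequalities. Since the product is ℤ-bilinear, the ring axioms need only be checked on
basis elements, where commutativity and the unit are immediate. For associativity, the
coefficient of b(2d+1) in (b(2a+1) × b(2b+1)) × b(2c+1) is the number of spins u such that both
(a, b, u) and (u, c, d) are triangles, namely min(a+b, c+d) + 1 - max(|a-b|, |c-d|), and this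
number is symmetric in a, b, c, d. -/

open Finsupp

section BilinearOnFreeModule

variable {R α : Type*} [CommSemiring R] (B : (α →₀ R) →ₗ[R] (α →₀ R) →ₗ[R] (α →₀ R))

theorem Finsupp.bilin_comm_of_single_one
    (h : ∀ p q, B (single p 1) (single q 1) = B (single q 1) (single p 1)) (f g : α →₀ R) :
    B f g = B g f := by
  have : B = B.flip := LinearMap.ext_basis Finsupp.basisSingleOne Finsupp.basisSingleOne
    fun p q => by simpa using h p q
  exact congr($this f g)

theorem Finsupp.bilin_assoc_of_single_one
    (h : ∀ p q r, B (B (single p 1) (single q 1)) (single r 1) =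
      B (single p 1) (B (single q 1) (single r 1)))
    (f g k : α →₀ R) : B (B f g) k = B f (B g k) := by
  have : B.compr₂ B = ((LinearMap.llcomp R _ _ _).comp B).compl₂ B :=
    LinearMap.ext_basis Finsupp.basisSingleOne Finsupp.basisSingleOne fun p q =>
      Finsupp.basisSingleOne.ext fun r => by simpa using h p q r
  exact congr($this f g k)

end BilinearOnFreeModule

def fusionCoeff (q r s : ℕ) : ℤ := if q < r + s ∧ r < q + s ∧ s < q + r then 1 else 0

lemma fusionCoeff_comm (q r s : ℕ) : fusionCoeff q r s = fusionCoeff r q s := by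
  simp only [fusionCoeff]
  split_ifs <;> omega

/-- The number of spins `u` such that both `(a, b, u)` and `(u, c, d)` satisfy the triangle
inequality. -/
def recouplingCount (a b c d : ℕ) : ℕ := min (a + b) (c + d) + 1 - max (a.dist b) (c.dist d)

/-- `min (a+b) (c+d) - max |a-b| |c-d|` is the minimum of `min (2x) (a+b+c+d-2x)` over
`x ∈ {a, b, c, d}`, so it is symmetric in all four arguments. -/
lemma recouplingCount_rotate (a b c d : ℕ) : recouplingCount a b c d = recouplingCount b c a d := by
  simp only [recouplingCount, Nat.dist]
  omega

lemma sum_fusionCoeff_range (a b c d : ℕ) :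
    ∑ k ∈ Finset.range (min (2 * a + 1) (2 * b + 1)),
        fusionCoeff (2 * a + 1 + (2 * b + 1) - 1 - 2 * k) (2 * c + 1) (2 * d + 1) =
      recouplingCount a b c d := by
  have hwindow : ((Finset.range (min (2 * a + 1) (2 * b + 1))).filter fun k =>
        2 * a + 1 + (2 * b + 1) - 1 - 2 * k < 2 * c + 1 + (2 * d + 1) ∧
        2 * c + 1 < 2 * a + 1 + (2 * b + 1) - 1 - 2 * k + (2 * d + 1) ∧
        2 * d + 1 < 2 * a + 1 + (2 * b + 1) - 1 - 2 * k + (2 * c + 1)) =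
      Finset.Ico (a + b - min (a + b) (c + d)) (a + b + 1 - max (a.dist b) (c.dist d)) := by
    ext k
    simp only [Finset.mem_filter, Finset.mem_range, Finset.mem_Ico, Nat.dist]
    omega
  simp only [fusionCoeff, Finset.sum_boole, hwindow, Nat.card_Ico, recouplingCount, Nat.dist]
  congr 1
  omega

lemma fusionBasisMul_apply (q r s : OddNat) : fusionBasisMul q r s = fusionCoeff q r s := by
  obtain ⟨q, a, hq⟩ := q; obtain ⟨r, b, hr⟩ := r; obtain ⟨s, c, hs⟩ := s
  have hlabel : ((Finset.range (min q r)).filter fun k => q + r - 1 - 2 * k = s) =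
      if q < r + s ∧ r < q + s ∧ s < q + r then {(q + r - 1 - s) / 2} else ∅ := by
    split_ifs <;> ext k <;> simp only [Finset.mem_filter, Finset.mem_range, Finset.mem_singleton,
      Finset.notMem_empty, iff_false] <;> omega
  simp only [fusionBasisMul, fusionIdx, finsetSum_apply, single_apply, Subtype.ext_iff,
    Finset.sum_attach _ (fun k => if q + r - 1 - 2 * k = s then (1 : ℤ) else 0), Finset.sum_boole,
    hlabel, fusionCoeff]
  split_ifs <;> rfl

lemma fusionBasisMul_comm (q r : OddNat) : fusionBasisMul q r = fusionBasisMul r q := by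
  ext s
  rw [fusionBasisMul_apply, fusionBasisMul_apply, fusionCoeff_comm]

lemma fusionBasisMul_one_left (r : OddNat) : fusionBasisMul ⟨1, odd_one⟩ r = single r 1 := by
  ext s
  rw [fusionBasisMul_apply, single_apply, fusionCoeff]
  obtain ⟨r, b, rfl⟩ := r; obtain ⟨s, c, rfl⟩ := s
  simp only [Subtype.ext_iff]
  split_ifs <;> omega

noncomputable def fusionMulₗ : FusionA →ₗ[ℤ] FusionA →ₗ[ℤ] FusionA :=
  linearCombination ℤ fun q => linearCombination ℤ (fusionBasisMul q)

lemma fusionMul_eq_fusionMulₗ (f g : FusionA) : fusionMul f g = fusionMulₗ f g := by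
  simp [fusionMul, fusionMulₗ, linearCombination_apply, LinearMap.finsupp_sum_apply,
    Finsupp.smul_sum, smul_smul]

lemma fusionMulₗ_single_single (q r : OddNat) :
    fusionMulₗ (single q 1) (single r 1) = fusionBasisMul q r := by
  simp [fusionMulₗ]

lemma fusionMulₗ_comm (f g : FusionA) : fusionMulₗ f g = fusionMulₗ g f :=
  bilin_comm_of_single_one _ (fun q r => by rw [fusionMulₗ_single_single, fusionMulₗ_single_single,
    fusionBasisMul_comm]) f g

lemma fusionMulₗ_fusionBasisMul_single_apply (p q r s : OddNat) :
    fusionMulₗ (fusionBasisMul p q) (single r 1) s =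
      ∑ k ∈ Finset.range (min p.1 q.1), fusionCoeff (p.1 + q.1 - 1 - 2 * k) r s := by
  rw [fusionBasisMul, map_sum, LinearMap.sum_apply, Finsupp.finsetSum_apply]
  simp only [fusionMulₗ_single_single, fusionBasisMul_apply]
  exact Finset.sum_attach _ (fun k => fusionCoeff (p.1 + q.1 - 1 - 2 * k) r s)

lemma fusionMulₗ_assoc (f g h : FusionA) :
    fusionMulₗ (fusionMulₗ f g) h = fusionMulₗ f (fusionMulₗ g h) := by
  refine bilin_assoc_of_single_one _ (fun p q r => ?_) f g h
  ext s
  rw [fusionMulₗ_single_single, fusionMulₗ_single_single, fusionMulₗ_comm (single p 1),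
    fusionMulₗ_fusionBasisMul_single_apply, fusionMulₗ_fusionBasisMul_single_apply]
  obtain ⟨_, a, rfl⟩ := p; obtain ⟨_, b, rfl⟩ := q; obtain ⟨_, c, rfl⟩ := r; obtain ⟨_, d, rfl⟩ := s
  rw [sum_fusionCoeff_range, sum_fusionCoeff_range, recouplingCount_rotate]

lemma fusionMulₗ_one_left (f : FusionA) : fusionMulₗ (single ⟨1, odd_one⟩ 1) f = f := by
  have : fusionMulₗ (single ⟨1, odd_one⟩ 1) = LinearMap.id :=
    Finsupp.basisSingleOne.ext fun r => by simp [fusionMulₗ_single_single, fusionBasisMul_one_left]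
  rw [this, LinearMap.id_apply]

theorem fusion_ring_axioms :
    (∀ f g h : FusionA, fusionMul (fusionMul f g) h = fusionMul f (fusionMul g h)) ∧
    (∀ f g : FusionA, fusionMul f g = fusionMul g f) ∧
    (∀ f : FusionA, fusionMul (Finsupp.single ⟨1, odd_one⟩ 1) f = f ∧
      fusionMul f (Finsupp.single ⟨1, odd_one⟩ 1) = f) := by
  simp only [fusionMul_eq_fusionMulₗ]
  exact ⟨fusionMulₗ_assoc, fusionMulₗ_comm, fun f =>
    ⟨fusionMulₗ_one_left f, (fusionMulₗ_comm _ _).trans (fusionMulₗ_one_left f)⟩⟩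
end

section
/- The map b(m) ↦ [V((m-1)/4)] from the fusion ring A of degenerate c=3/2 minimal models to the Grothendieck ring of finite-dimensional osp(1|2)-representations is a ring isomorphism, where the Grothendieck ring has basis [V(j)] for half-integers j ≥ 0 with product [V(i)]·[V(j)] = Σ_{k=|i-j|}^{i+j} [V(k)] (k in half-integer steps). -/
/-- The Grothendieck group of finite-dimensional osp(1|2)-modules: the free
abelian group on the classes [V(j)], 2j ∈ ℕ, indexed here by n = 2j. -/
abbrev GrothOsp := ℕ →₀ ℤ

/-- [V(i)]·[V(j)] = Σ_{k=|i-j|}^{i+j} [V(k)], k in half-integer steps; in the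
doubled labels a = 2i, b = 2j this is Σ_{t=0}^{2 min(a,b)} [V((a+b-t)/2)]. -/
noncomputable def grBasisMul (a b : ℕ) : GrothOsp :=
  ∑ t ∈ Finset.range (2 * min a b + 1), Finsupp.single (a + b - t) 1

/-- The ℤ-bilinear extension of the Clebsch-Gordan product. -/
noncomputable def grMul (f g : GrothOsp) : GrothOsp :=
  f.sum fun a c => g.sum fun b d => (c * d) • grBasisMul a b

/-- The ℤ-linear map A → Rep(osp(1|2)) sending b(m) to [V((m-1)/4)]
(whose doubled label is 2·(m-1)/4 = (m-1)/2). -/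
noncomputable def fusionToGroth : FusionA → GrothOsp :=
  Finsupp.mapDomain (fun q : OddNat => (q.1 - 1) / 2)

/- STATEMENT 8: b(m) ↦ [V((m-1)/4)] is a ring isomorphism from the fusion
ring A of degenerate c = 3/2 minimal models onto the Grothendieck ring of
finite-dimensional osp(1|2)-representations. -/

def toHalf : OddNat → ℕ := fun q => (q.1 - 1) / 2

def ofHalf : ℕ → OddNat := fun n => ⟨2 * n + 1, ⟨n, by omega⟩⟩

lemma toHalf_ofHalf (n : ℕ) : toHalf (ofHalf n) = n := by
  simp [toHalf, ofHalf]

lemma toHalf_inj : Function.Injective toHalf := by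
  intro q r h
  obtain ⟨a, ha⟩ := q.2; obtain ⟨b, hb⟩ := r.2
  simp only [toHalf] at h
  exact Subtype.ext (by omega)

lemma fusionToGroth_eq : fusionToGroth = Finsupp.mapDomain toHalf := rfl

noncomputable def fgL : FusionA →ₗ[ℤ] GrothOsp := Finsupp.lmapDomain ℤ ℤ toHalf

lemma fgL_eq : (fgL : FusionA → GrothOsp) = fusionToGroth := rfl

lemma map_basisMul (q r : OddNat) :
    fusionToGroth (fusionBasisMul q r) = grBasisMul (toHalf q) (toHalf r) := by
  obtain ⟨a, ha⟩ := q.2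
  obtain ⟨b, hb⟩ := r.2
  rw [fusionToGroth_eq, fusionBasisMul, Finsupp.mapDomain_finset_sum]
  have h1 : ∀ (k : {x // x ∈ Finset.range (min q.1 r.1)}),
      Finsupp.mapDomain toHalf
        (Finsupp.single (fusionIdx q r k.1 (Finset.mem_range.mp k.2)) (1:ℤ))
      = Finsupp.single ((toHalf q) + (toHalf r) - k.1) 1 := by
    intro k
    have hk := Finset.mem_range.mp k.2
    rw [Finsupp.mapDomain_single]
    congr 1
    simp only [toHalf, fusionIdx]
    omega
  rw [Finset.sum_congr rfl (fun k _ => h1 k)]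
  rw [Finset.sum_attach (Finset.range (min q.1 r.1))
    (fun k => Finsupp.single ((toHalf q) + (toHalf r) - k) (1:ℤ))]
  have hmin : min q.1 r.1 = 2 * min (toHalf q) (toHalf r) + 1 := by
    simp only [toHalf]; omega
  rw [hmin, grBasisMul]

theorem fusion_iso_groth :
    Function.Bijective fusionToGroth ∧
    (∀ f g : FusionA, fusionToGroth (f + g) = fusionToGroth f + fusionToGroth g) ∧
    (∀ f g : FusionA, fusionToGroth (fusionMul f g) = grMul (fusionToGroth f) (fusionToGroth g)) := by
  refine ⟨⟨Finsupp.mapDomain_injective toHalf_inj, ?_⟩, ?_, ?_⟩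
  · intro h
    refine ⟨Finsupp.mapDomain ofHalf h, ?_⟩
    rw [fusionToGroth_eq, ← Finsupp.mapDomain_comp]
    have : toHalf ∘ ofHalf = id := funext toHalf_ofHalf
    rw [this, Finsupp.mapDomain_id]
  · intro f g
    exact Finsupp.mapDomain_add
  · intro f g
    rw [← fgL_eq, fusionMul, map_finsuppSum]
    simp only [map_finsuppSum, map_zsmul]
    rw [grMul]
    have hsum : ∀ (v : FusionA) (h : ℕ → ℤ → GrothOsp),
        (fgL v).sum h = v.sum (fun q a => h (toHalf q) a) :=
      fun v h => Finsupp.sum_mapDomain_index_inj toHalf_inj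
    rw [hsum]
    refine Finsupp.sum_congr fun q _ => ?_
    rw [hsum]
    refine Finsupp.sum_congr fun r _ => ?_
    rw [fgL_eq, map_basisMul]
end
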